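/- arXiv:2601.08498 — 4 statements merged into one kernel-verified Lean document; each statement's English description precedes it below -/
import Mathlib

section
/- Consider the semidiscrete finite volume scheme for the 1D Navier–Stokes–Korteweg system on the periodic grid with N cells. Suppose ρ, m : ℝ → (ZMod N → ℝ) satisfy, for every time t and every index i, ρ_i(t) > 0 and the ODEs (in the sense of HasDerivAt) −dρ_i/dt = ∇ᶜ(ρu)_i − λ(t) h Δ_h ρ_i and −dm_i/dt = ∇ᶜ(ρu²)_i + ∇ᶜ(p∘ρ)_i − λ(t) h Δ_h m_i − μ Δ_h u_i − κ ∇⁻[ (ρ_{i+1} Δ_h ρ_i + ρ_i Δ_h ρ_{i+1})/2 − (1/2) (∇⁺ρ_i)² ], where u_i = m_i/ρ_i. Then the total momentum t ↦ ∑_{i} m_i(t) is constant in time, i.e. its derivative is zero at every t. -/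
open Finset

noncomputable section

/-- Grid spacing `h = 1/N`. -/
def hh (N : ℕ) : ℝ := 1 / (N : ℝ)

/-- Central difference `∇ᶜφ_i = (φ_{i+1} − φ_{i−1})/(2h)`. -/
def dC (N : ℕ) (φ : ZMod N → ℝ) (i : ZMod N) : ℝ := (φ (i + 1) - φ (i - 1)) / (2 * hh N)

/-- Forward difference `∇⁺φ_i = (φ_{i+1} − φ_i)/h`. -/
def dP (N : ℕ) (φ : ZMod N → ℝ) (i : ZMod N) : ℝ := (φ (i + 1) - φ i) / hh N

/-- Backward difference `∇⁻φ_i = (φ_i − φ_{i−1})/h`. -/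
def dM (N : ℕ) (φ : ZMod N → ℝ) (i : ZMod N) : ℝ := (φ i - φ (i - 1)) / hh N

/-- Discrete Laplacian `Δ_hφ_i = (φ_{i+1} − 2φ_i + φ_{i−1})/h²`. -/
def dL (N : ℕ) (φ : ZMod N → ℝ) (i : ZMod N) : ℝ :=
  (φ (i + 1) - 2 * φ i + φ (i - 1)) / (hh N) ^ 2

/-- Right-hand side of the semidiscrete density equation: `−dρ_i/dt = Frho i`. -/
def Frho (N : ℕ) (lamt : ℝ) (ρ m : ZMod N → ℝ) (i : ZMod N) : ℝ :=
  dC N (fun j => ρ j * (m j / ρ j)) i - lamt * hh N * dL N ρ i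

/-- Right-hand side of the semidiscrete momentum equation: `−dm_i/dt = Fm i`. -/
def Fm (N : ℕ) (p : ℝ → ℝ) (μ κ lamt : ℝ) (ρ m : ZMod N → ℝ) (i : ZMod N) : ℝ :=
  dC N (fun j => ρ j * (m j / ρ j) ^ 2) i + dC N (fun j => p (ρ j)) i
    - lamt * hh N * dL N m i - μ * dL N (fun j => m j / ρ j) i
    - κ * dM N (fun j =>
        (ρ (j + 1) * dL N ρ j + ρ j * dL N ρ (j + 1)) / 2 - (1 / 2) * (dP N ρ j) ^ 2) i

/-! Every term of the momentum flux `Fm` is a central, backward or second difference of a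
periodic grid function, and the sum over the torus `ZMod N` of any such difference vanishes
because the sum is invariant under index shifts. Differentiating the total momentum term by
term therefore gives `-∑ i, Fm i = 0`. -/

theorem Fintype.sum_comp_add_right {G M : Type*} [AddGroup G] [Fintype G] [AddCommMonoid M]
    (φ : G → M) (c : G) : ∑ i, φ (i + c) = ∑ i, φ i :=
  Equiv.sum_comp (Equiv.addRight c) φ

theorem Fintype.sum_comp_sub_right {G M : Type*} [AddGroup G] [Fintype G] [AddCommMonoid M]
    (φ : G → M) (c : G) : ∑ i, φ (i - c) = ∑ i, φ i :=
  Equiv.sum_comp (Equiv.subRight c) φ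

section PeriodicSums

variable {N : ℕ} [NeZero N]

theorem sum_dC_eq_zero (φ : ZMod N → ℝ) : ∑ i, dC N φ i = 0 := by
  simp only [dC, ← Finset.sum_div, Finset.sum_sub_distrib, Fintype.sum_comp_add_right,
    Fintype.sum_comp_sub_right, sub_self, zero_div]

theorem sum_dM_eq_zero (φ : ZMod N → ℝ) : ∑ i, dM N φ i = 0 := by
  simp only [dM, ← Finset.sum_div, Finset.sum_sub_distrib, Fintype.sum_comp_sub_right,
    sub_self, zero_div]

theorem sum_dL_eq_zero (φ : ZMod N → ℝ) : ∑ i, dL N φ i = 0 := by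
  simp only [dL, ← Finset.sum_div, Finset.sum_add_distrib, Finset.sum_sub_distrib,
    ← Finset.mul_sum, Fintype.sum_comp_add_right, Fintype.sum_comp_sub_right]
  ring

theorem sum_Fm_eq_zero (p : ℝ → ℝ) (μ κ lamt : ℝ) (ρ m : ZMod N → ℝ) :
    ∑ i, Fm N p μ κ lamt ρ m i = 0 := by
  simp only [Fm, Finset.sum_add_distrib, Finset.sum_sub_distrib, ← Finset.mul_sum,
    sum_dC_eq_zero, sum_dM_eq_zero, sum_dL_eq_zero]
  ring

end PeriodicSums

theorem momentum_conservation_1d_general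
    (N : ℕ) [NeZero N]
    (p : ℝ → ℝ) (μ κ : ℝ) (lam : ℝ → ℝ)
    (ρ m : ℝ → ZMod N → ℝ)
    (hm : ∀ t : ℝ, ∀ i : ZMod N,
      HasDerivAt (fun s => m s i) (-(Fm N p μ κ (lam t) (ρ t) (m t) i)) t) :
    ∀ t : ℝ, HasDerivAt (fun s => ∑ i : ZMod N, m s i) 0 t := by
  intro t
  simpa only [Finset.sum_neg_distrib, sum_Fm_eq_zero, neg_zero] using
    HasDerivAt.fun_sum (u := Finset.univ) fun i _ => hm t i

/-- Conservation of total momentum for the 1D semidiscrete NSK scheme. -/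
theorem momentum_conservation_1d
    (N : ℕ) [NeZero N]
    (p : ℝ → ℝ) (μ κ : ℝ) (lam : ℝ → ℝ)
    (ρ m : ℝ → ZMod N → ℝ)
    (hpos : ∀ t : ℝ, ∀ i : ZMod N, 0 < ρ t i)
    (hρ : ∀ t : ℝ, ∀ i : ZMod N,
      HasDerivAt (fun s => ρ s i) (-(Frho N (lam t) (ρ t) (m t) i)) t)
    (hm : ∀ t : ℝ, ∀ i : ZMod N,
      HasDerivAt (fun s => m s i) (-(Fm N p μ κ (lam t) (ρ t) (m t) i)) t) :
    ∀ t : ℝ, HasDerivAt (fun s => ∑ i : ZMod N, m s i) 0 t :=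
  momentum_conservation_1d_general N p μ κ lam ρ m hm
end
end

section
/- Consider the semidiscrete finite volume scheme for the 1D Navier–Stokes–Korteweg system on the periodic grid with N cells, with μ ≥ 0, κ > 0, pressure p differentiable on (0,∞) with p' > 0 there, and potential energy P : ℝ → ℝ differentiable and convex on (0,∞) satisfying r·P'(r) − P(r) = p(r) for all r > 0. Suppose ρ, m : ℝ → (ZMod N → ℝ) satisfy, for every time t and every index i, ρ_i(t) > 0 and the ODEs (in the sense of HasDerivAt) −dρ_i/dt = ∇ᶜ(ρu)_i − λ(t) h Δ_h ρ_i and −dm_i/dt = ∇ᶜ(ρu²)_i + ∇ᶜ(p∘ρ)_i − λ(t) h Δ_h m_i − μ Δ_h u_i − κ ∇⁻[ (ρ_{i+1} Δ_h ρ_i + ρ_i Δ_h ρ_{i+1})/2 − (1/2) (∇⁺ρ_i)² ], where u_i = m_i/ρ_i, and suppose λ(t) ≥ (1/2)·max_{i} ( |u_i(t)| + √(p'(ρ_i(t))) ) for every t. Then the total discrete energy t ↦ ∑_i E_i(t), with E_i = (1/2)ρ_i u_i² + P(ρ_i) + (κ/2)(∇⁺ρ_i)², is differentiable at every t and its derivative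 satisfies d/dt ∑_i E_i(t) ≤ −μ ∑_i (∇⁺u_i(t))² − κ λ(t) h ∑_i (Δ_h ρ_i(t))² ≤ 0. -/
open Finset

noncomputable section

/-! Summation by parts turns the energy rate into `∑ u ṁ + ∑ (P'(ρ) - u²/2 - κ Δ_h ρ) ρ̇`.
Inserting the scheme, the work of the Korteweg stress cancels exactly against the transport part
of `-κ Δ_h ρ ρ̇` (a discrete form of `∫ ρ_xx (ρu)_x = ∫ K u_x`), the viscosity gives
`-μ ∑ (∇⁺u)²`, the density diffusion gives `-κ λ h ∑ (Δ_h ρ)²`, and the Euler part, after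
subtracting the telescoping entropy flux, becomes `-1/h` times a sum of edge terms. Each edge
term is nonnegative: its sign-indefinite part is cubic in the jumps and is dominated by the
numerical viscosity as soon as `|u| ≤ 2λ`, convexity of `P` bounding the trapezoid-rule error
of `∫ P'` across the edge. -/

lemma dC_eq {N : ℕ} (φ : ZMod N → ℝ) (i : ZMod N) :
    dC N φ i = (dP N φ i + dP N φ (i - 1)) / 2 := by
  simp only [dC, dP, sub_add_cancel]
  ring

section SummationByParts

variable {N : ℕ} [NeZero N]

lemma hh_pos : 0 < hh N :=
  one_div_pos.2 (Nat.cast_pos.2 (NeZero.pos N))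

lemma sum_comp_add_one (f : ZMod N → ℝ) : ∑ i, f (i + 1) = ∑ i, f i :=
  Equiv.sum_comp (Equiv.addRight (1 : ZMod N)) f

lemma sum_comp_sub_one (f : ZMod N → ℝ) : ∑ i, f (i - 1) = ∑ i, f i :=
  Equiv.sum_comp (Equiv.subRight (1 : ZMod N)) f

lemma sum_dP (φ : ZMod N → ℝ) : ∑ i, dP N φ i = 0 := by
  simp only [dP, ← sum_div, sum_sub_distrib, sum_comp_add_one, sub_self, zero_div]

lemma dM_dP (φ : ZMod N → ℝ) (i : ZMod N) : dM N (dP N φ) i = dL N φ i := by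
  have hh0 := (hh_pos (N := N)).ne'
  simp only [dM, dP, dL, sub_add_cancel]
  field_simp
  ring

lemma sum_mul_dM (φ ψ : ZMod N → ℝ) : ∑ i, φ i * dM N ψ i = -∑ i, dP N φ i * ψ i := by
  have shift : ∑ i, φ (i + 1) * ψ i = ∑ i, φ i * ψ (i - 1) := by
    rw [← sum_comp_sub_one]; simp only [sub_add_cancel]
  simp only [dM, dP, mul_div_assoc', div_mul_eq_mul_div, ← sum_div, mul_sub, sub_mul,
    sum_sub_distrib, shift]
  ring

lemma sum_mul_dL (φ ψ : ZMod N → ℝ) : ∑ i, φ i * dL N ψ i = -∑ i, dP N φ i * dP N ψ i := by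
  simp only [← dM_dP, sum_mul_dM]

lemma sum_mul_dC (φ ψ : ZMod N → ℝ) :
    ∑ i, φ i * dC N ψ i = (∑ i, (φ i + φ (i + 1)) * dP N ψ i) / 2 := by
  have shift : ∑ i, φ i * dP N ψ (i - 1) = ∑ i, φ (i + 1) * dP N ψ i := by
    rw [← sum_comp_add_one]; simp only [add_sub_cancel_right]
  simp only [dC_eq, mul_div_assoc', ← sum_div, mul_add, add_mul, sum_add_distrib, shift]

end SummationByParts

/-- The discrete Korteweg stress: `Fm` contains the term `- κ * dM N (korteweg N ρ) i`. -/
def korteweg (N : ℕ) (ρ : ZMod N → ℝ) (j : ZMod N) : ℝ :=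
  (ρ (j + 1) * dL N ρ j + ρ j * dL N ρ (j + 1)) / 2 - (1 / 2) * (dP N ρ j) ^ 2

lemma sum_dL_mul_dC_mul {N : ℕ} [NeZero N] (a u : ZMod N → ℝ) :
    ∑ i, dL N a i * dC N (fun j => a j * u j) i = ∑ i, dP N u i * korteweg N a i := by
  have hh0 := (hh_pos (N := N)).ne'
  have edge : ∀ i, (dL N a i + dL N a (i + 1)) * dP N (fun j => a j * u j) i
      = 2 * (dP N u i * korteweg N a i) + u i * dP N a i * dL N a i
        + u (i + 1) * dP N a i * dL N a (i + 1) + dP N u i * dP N a i ^ 2 := by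
    intro i
    simp only [korteweg, dP]
    field_simp
    ring
  have shift : ∑ i, u (i + 1) * dP N a i * dL N a (i + 1)
      = ∑ i, u i * dP N a (i - 1) * dL N a i := by
    rw [← sum_comp_add_one (fun i => u i * dP N a (i - 1) * dL N a i)]
    simp only [add_sub_cancel_right]
  have transport : ∑ i, u i * dP N a i * dL N a i + ∑ i, u i * dP N a (i - 1) * dL N a i
      = -∑ i, dP N u i * dP N a i ^ 2 := by
    rw [← sum_add_distrib, ← sum_mul_dM]
    refine sum_congr rfl fun i _ => ?_
    simp only [← dM_dP, dM]
    ring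
  rw [sum_mul_dC]
  simp only [edge, sum_add_distrib, shift, ← mul_sum]
  linear_combination transport / 2

section Euler

variable (p P' : ℝ → ℝ) (l : ℝ)

/-- `∂E/∂ρ` at fixed momentum, for the energy density `E = m²/(2ρ) + P(ρ)`. -/
def entropyVar (a u : ℝ) : ℝ := P' a - u ^ 2 / 2

/-- `u (E + p)`, with `p = ρ P'(ρ) - P(ρ)` substituted. -/
def entropyFlux (a u : ℝ) : ℝ := a * u ^ 3 / 2 + a * u * P' a

/-- `h` times the contribution of the edge `(i, i + 1)` to minus the Euler part of the energy
rate: the defect of the central fluxes, then the numerical viscosity with coefficient `l`. -/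
def edgeDissipation (a₀ a₁ u₀ u₁ : ℝ) : ℝ :=
  (entropyVar P' a₀ u₀ + entropyVar P' a₁ u₁) * (a₁ * u₁ - a₀ * u₀) / 2
    + (u₀ + u₁) * (a₁ * u₁ ^ 2 - a₀ * u₀ ^ 2) / 2 + (u₀ + u₁) * (p a₁ - p a₀) / 2
    - (entropyFlux P' a₁ u₁ - entropyFlux P' a₀ u₀)
    + l * ((entropyVar P' a₁ u₁ - entropyVar P' a₀ u₀) * (a₁ - a₀)
      + (u₁ - u₀) * (a₁ * u₁ - a₀ * u₀))

lemma sum_euler_eq {N : ℕ} [NeZero N] (a u : ZMod N → ℝ) :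
    ∑ i, entropyVar P' (a i) (u i) * (-dC N (fun j => a j * u j) i + l * hh N * dL N a i)
      + ∑ i, u i * (-dC N (fun j => a j * u j ^ 2) i - dC N (fun j => p (a j)) i
        + l * hh N * dL N (fun j => a j * u j) i)
    = -(∑ i, edgeDissipation p P' l (a i) (a (i + 1)) (u i) (u (i + 1))) / hh N := by
  set v := fun j => entropyVar P' (a j) (u j)
  have edge : ∀ i, edgeDissipation p P' l (a i) (a (i + 1)) (u i) (u (i + 1)) / hh N
      = (v i + v (i + 1)) * dP N (fun j => a j * u j) i / 2
        + (u i + u (i + 1)) * dP N (fun j => a j * u j ^ 2) i / 2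
        + (u i + u (i + 1)) * dP N (fun j => p (a j)) i / 2
        - dP N (fun j => entropyFlux P' (a j) (u j)) i
        + l * hh N * (dP N v i * dP N a i + dP N u i * dP N (fun j => a j * u j) i) := by
    intro i
    simp only [edgeDissipation, dP, v]
    field_simp
  have e1 := sum_mul_dC v (fun j => a j * u j)
  have e2 := sum_mul_dC u (fun j => a j * u j ^ 2)
  have e3 := sum_mul_dC u (fun j => p (a j))
  have e4 := sum_mul_dL v a
  have e5 := sum_mul_dL u (fun j => a j * u j)
  have e6 := sum_dP (fun j => entropyFlux P' (a j) (u j))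
  have split : ∀ i, entropyVar P' (a i) (u i) * (-dC N (fun j => a j * u j) i + l * hh N * dL N a i)
      + u i * (-dC N (fun j => a j * u j ^ 2) i - dC N (fun j => p (a j)) i
        + l * hh N * dL N (fun j => a j * u j) i)
      = -(v i * dC N (fun j => a j * u j) i) + l * hh N * (v i * dL N a i)
        - u i * dC N (fun j => a j * u j ^ 2) i - u i * dC N (fun j => p (a j)) i
        + l * hh N * (u i * dL N (fun j => a j * u j) i) := fun i => by ring
  rw [← sum_add_distrib, sum_congr rfl fun i _ => split i, neg_div, sum_div]
  simp only [edge, sum_add_distrib, sum_sub_distrib, sum_neg_distrib, ← mul_sum, ← sum_div]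
  linear_combination -e1 - e2 - e3 + l * hh N * e4 + l * hh N * e5 - e6

lemma ConvexOn.mul_sub_le_sub_of_hasDerivAt {S : Set ℝ} {f : ℝ → ℝ} {f' x y : ℝ}
    (hf : ConvexOn ℝ S f) (hx : x ∈ S) (hy : y ∈ S) (hf' : HasDerivAt f f' x) :
    f' * (y - x) ≤ f y - f x := by
  rcases lt_trichotomy x y with hxy | rfl | hxy
  · have := hf.le_slope_of_hasDerivAt hx hy hxy hf'
    rw [slope_def_field, le_div_iff₀ (sub_pos.2 hxy)] at this
    exact this
  · simp
  · have := hf.slope_le_of_hasDerivAt hy hx hxy hf'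
    rw [slope_def_field, div_le_iff₀ (sub_pos.2 hxy)] at this
    linarith

lemma abs_sub_add_abs_add_le {u₀ u₁ c : ℝ} (h₀ : |u₀| ≤ c) (h₁ : |u₁| ≤ c) :
    |u₁ - u₀| + |u₀ + u₁| ≤ 2 * c := by
  rw [abs_le] at h₀ h₁
  rcases abs_cases (u₁ - u₀) with ⟨e, _⟩ | ⟨e, _⟩ <;>
    rcases abs_cases (u₀ + u₁) with ⟨e', _⟩ | ⟨e', _⟩ <;> linarith

lemma flux_defect_le_viscosity {a₀ a₁ u₀ u₁ l D B : ℝ} (ha₀ : 0 < a₀) (ha₁ : 0 < a₁)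
    (hu₀ : |u₀| ≤ 2 * l) (hu₁ : |u₁| ≤ 2 * l) (hB : |B| ≤ D / 2) :
    (a₀ + a₁) / 8 * (u₁ - u₀) ^ 3 + (u₀ + u₁) * (u₁ - u₀) ^ 2 * (a₁ - a₀) / 8
        + (u₁ - u₀) * D / 4 - (u₀ + u₁) * B / 2
      ≤ l * ((a₀ + a₁) / 2 * (u₁ - u₀) ^ 2 + D) := by
  set s := u₁ - u₀
  set w := u₀ + u₁
  -- each defect term is at most `(|s| + |w|) / 4` times its viscous counterpart
  have hsw : |s| + |w| ≤ 4 * l := by linarith [abs_sub_add_abs_add_le hu₀ hu₁]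
  have hD : 0 ≤ D := by linarith [abs_nonneg B]
  have hA : 0 ≤ (a₀ + a₁) * s ^ 2 := by positivity
  have hΔa : |a₁ - a₀| ≤ a₀ + a₁ := abs_le.2 ⟨by linarith, by linarith⟩
  have cubic : (a₀ + a₁) * s ^ 3 ≤ |s| * ((a₀ + a₁) * s ^ 2) := by
    have := mul_le_mul_of_nonneg_right (le_abs_self s) hA
    linarith
  have mixed : w * (a₁ - a₀) * s ^ 2 ≤ |w| * (a₀ + a₁) * s ^ 2 := by
    refine mul_le_mul_of_nonneg_right ?_ (sq_nonneg s)
    calc w * (a₁ - a₀) ≤ |w| * |a₁ - a₀| := by rw [← abs_mul]; exact le_abs_self _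
      _ ≤ |w| * (a₀ + a₁) := mul_le_mul_of_nonneg_left hΔa (abs_nonneg w)
  have pressureWork : s * D ≤ |s| * D := mul_le_mul_of_nonneg_right (le_abs_self s) hD
  have pressureDefect : -(w * B) ≤ |w| * (D / 2) := by
    calc -(w * B) ≤ |w| * |B| := by rw [← abs_mul]; exact neg_le_abs _
      _ ≤ |w| * (D / 2) := mul_le_mul_of_nonneg_left hB (abs_nonneg w)
  have total : (|s| + |w|) * ((a₀ + a₁) / 2 * s ^ 2 + D) ≤ 4 * l * ((a₀ + a₁) / 2 * s ^ 2 + D) :=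
    mul_le_mul_of_nonneg_right hsw (by positivity)
  linarith

variable {p P' l} in
lemma edgeDissipation_nonneg {P : ℝ → ℝ} (hP : ∀ r, 0 < r → HasDerivAt P (P' r) r)
    (hPconv : ConvexOn ℝ (Set.Ioi 0) P) (hPp : ∀ r, 0 < r → r * P' r - P r = p r)
    {a₀ a₁ u₀ u₁ : ℝ} (ha₀ : 0 < a₀) (ha₁ : 0 < a₁) (hu₀ : |u₀| ≤ 2 * l) (hu₁ : |u₁| ≤ 2 * l) :
    0 ≤ edgeDissipation p P' l a₀ a₁ u₀ u₁ := by
  have tangent₀ := hPconv.mul_sub_le_sub_of_hasDerivAt ha₀ ha₁ (hP a₀ ha₀)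
  have tangent₁ := hPconv.mul_sub_le_sub_of_hasDerivAt ha₁ ha₀ (hP a₁ ha₁)
  have trapezoid : |(P' a₀ + P' a₁) / 2 * (a₁ - a₀) - (P a₁ - P a₀)|
      ≤ (P' a₁ - P' a₀) * (a₁ - a₀) / 2 := abs_le.2 ⟨by linarith, by linarith⟩
  have := flux_defect_le_viscosity ha₀ ha₁ hu₀ hu₁ trapezoid
  have reduce : edgeDissipation p P' l a₀ a₁ u₀ u₁
      = l * ((a₀ + a₁) / 2 * (u₁ - u₀) ^ 2 + (P' a₁ - P' a₀) * (a₁ - a₀))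
        - ((a₀ + a₁) / 8 * (u₁ - u₀) ^ 3 + (u₀ + u₁) * (u₁ - u₀) ^ 2 * (a₁ - a₀) / 8
          + (u₁ - u₀) * ((P' a₁ - P' a₀) * (a₁ - a₀)) / 4
          - (u₀ + u₁) * ((P' a₀ + P' a₁) / 2 * (a₁ - a₀) - (P a₁ - P a₀)) / 2) := by
    simp only [edgeDissipation, entropyVar, entropyFlux, ← hPp a₀ ha₀, ← hPp a₁ ha₁]
    ring
  linarith

end Euler

lemma HasDerivAt.kineticEnergy {ρ m : ℝ → ℝ} {ρ' m' t : ℝ} (hρ : HasDerivAt ρ ρ' t)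
    (hm : HasDerivAt m m' t) (hρt : ρ t ≠ 0) :
    HasDerivAt (fun s => 1 / 2 * ρ s * (m s / ρ s) ^ 2)
      (m t / ρ t * m' - (m t / ρ t) ^ 2 / 2 * ρ') t := by
  refine ((hρ.const_mul (1 / 2)).mul ((hm.fun_div hρ hρt).fun_pow 2)).congr_deriv ?_
  simp only [Nat.cast_ofNat, Nat.add_one_sub_one, pow_one]
  field_simp
  ring

lemma hasDerivAt_dP {N : ℕ} {ρ : ℝ → ZMod N → ℝ} {ρ' : ZMod N → ℝ} {t : ℝ}
    (hρ : ∀ i, HasDerivAt (fun s => ρ s i) (ρ' i) t) (i : ZMod N) :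
    HasDerivAt (fun s => dP N (ρ s) i) (dP N ρ' i) t :=
  ((hρ (i + 1)).sub (hρ i)).div_const (hh N)

theorem hasDerivAt_energy {N : ℕ} [NeZero N] {P P' : ℝ → ℝ} (κ : ℝ) {ρ m : ℝ → ZMod N → ℝ}
    {ρ' m' : ZMod N → ℝ} {t : ℝ} (hpos : ∀ i, 0 < ρ t i)
    (hP : ∀ i, HasDerivAt P (P' (ρ t i)) (ρ t i))
    (hρ : ∀ i, HasDerivAt (fun s => ρ s i) (ρ' i) t)
    (hm : ∀ i, HasDerivAt (fun s => m s i) (m' i) t) :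
    HasDerivAt (fun s => ∑ i : ZMod N,
        ((1 / 2) * ρ s i * (m s i / ρ s i) ^ 2 + P (ρ s i) + κ / 2 * (dP N (ρ s) i) ^ 2))
      (∑ i, (m t i / ρ t i * m' i
        + (entropyVar P' (ρ t i) (m t i / ρ t i) - κ * dL N (ρ t) i) * ρ' i)) t := by
  have hsum : HasDerivAt (fun s => ∑ i : ZMod N,
        ((1 / 2) * ρ s i * (m s i / ρ s i) ^ 2 + P (ρ s i) + κ / 2 * (dP N (ρ s) i) ^ 2))
      (∑ i, ((m t i / ρ t i * m' i - (m t i / ρ t i) ^ 2 / 2 * ρ' i + P' (ρ t i) * ρ' i)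
        + κ * (dP N ρ' i * dP N (ρ t) i))) t :=
    HasDerivAt.fun_sum fun i _ =>
      ((((hρ i).kineticEnergy (hm i) (hpos i).ne').add ((hP i).comp t (hρ i))).add
        (((hasDerivAt_dP hρ i).fun_pow 2).const_mul (κ / 2))).congr_deriv
        (by simp only [Nat.cast_ofNat, Nat.add_one_sub_one, pow_one]; ring)
  have split : ∀ i, m t i / ρ t i * m' i
      + (entropyVar P' (ρ t i) (m t i / ρ t i) - κ * dL N (ρ t) i) * ρ' i
      = (m t i / ρ t i * m' i - (m t i / ρ t i) ^ 2 / 2 * ρ' i + P' (ρ t i) * ρ' i)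
        - κ * (ρ' i * dL N (ρ t) i) := fun i => by
    simp only [entropyVar]
    ring
  refine hsum.congr_deriv ?_
  rw [sum_congr rfl fun i _ => split i, sum_sub_distrib, sum_add_distrib, ← mul_sum, ← mul_sum,
    sum_mul_dL]
  ring

theorem scheme_energy_rate_eq {N : ℕ} [NeZero N] (p P' : ℝ → ℝ) (μ κ l : ℝ) {ρ m : ZMod N → ℝ}
    (hpos : ∀ i, 0 < ρ i) :
    ∑ i, (m i / ρ i * -Fm N p μ κ l ρ m i
        + (entropyVar P' (ρ i) (m i / ρ i) - κ * dL N ρ i) * -Frho N l ρ m i)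
      = -(∑ i, edgeDissipation p P' l (ρ i) (ρ (i + 1)) (m i / ρ i) (m (i + 1) / ρ (i + 1)))
          / hh N
        - μ * ∑ i, (dP N (fun j => m j / ρ j) i) ^ 2 - κ * l * hh N * ∑ i, (dL N ρ i) ^ 2 := by
  set u := fun j => m j / ρ j
  have hmom : (fun j => ρ j * u j) = m := funext fun j => mul_div_cancel₀ _ (hpos j).ne'
  have hFm : ∀ i, Fm N p μ κ l ρ m i = dC N (fun j => ρ j * u j ^ 2) i
      + dC N (fun j => p (ρ j)) i - l * hh N * dL N (fun j => ρ j * u j) i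
      - μ * dL N u i - κ * dM N (korteweg N ρ) i := by
    intro i
    rw [hmom]
    rfl
  have split : ∀ i, u i * -Fm N p μ κ l ρ m i
      + (entropyVar P' (ρ i) (u i) - κ * dL N ρ i) * -Frho N l ρ m i
      = (entropyVar P' (ρ i) (u i) * (-dC N (fun j => ρ j * u j) i + l * hh N * dL N ρ i)
          + u i * (-dC N (fun j => ρ j * u j ^ 2) i - dC N (fun j => p (ρ j)) i
            + l * hh N * dL N (fun j => ρ j * u j) i))
        + μ * (u i * dL N u i) + κ * (u i * dM N (korteweg N ρ) i)
        + κ * (dL N ρ i * dC N (fun j => ρ j * u j) i) - κ * l * hh N * dL N ρ i ^ 2 := by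
    intro i
    rw [hFm, Frho]
    ring
  have viscous : ∑ i, u i * dL N u i = -∑ i, dP N u i ^ 2 := by
    simpa only [sq] using sum_mul_dL u u
  rw [sum_congr rfl fun i _ => split i]
  simp only [sum_add_distrib, sum_sub_distrib, ← mul_sum]
  linear_combination sum_euler_eq p P' l ρ u + μ * viscous + κ * sum_mul_dM u (korteweg N ρ)
    + κ * sum_dL_mul_dC_mul ρ u

theorem energy_dissipation_1d_general
    (N : ℕ) [NeZero N]
    (p p' P P' : ℝ → ℝ) (μ κ : ℝ) (lam : ℝ → ℝ)
    (hμ : 0 ≤ μ) (hκ : 0 < κ)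
    (hP : ∀ r : ℝ, 0 < r → HasDerivAt P (P' r) r)
    (hPconv : ConvexOn ℝ (Set.Ioi (0 : ℝ)) P)
    (hPp : ∀ r : ℝ, 0 < r → r * P' r - P r = p r)
    (ρ m : ℝ → ZMod N → ℝ)
    (hpos : ∀ t : ℝ, ∀ i : ZMod N, 0 < ρ t i)
    (hρ : ∀ t : ℝ, ∀ i : ZMod N,
      HasDerivAt (fun s => ρ s i) (-(Frho N (lam t) (ρ t) (m t) i)) t)
    (hm : ∀ t : ℝ, ∀ i : ZMod N,
      HasDerivAt (fun s => m s i) (-(Fm N p μ κ (lam t) (ρ t) (m t) i)) t)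
    (hlam : ∀ t : ℝ, lam t ≥ (1 / 2) *
      Finset.univ.sup' ⟨0, Finset.mem_univ 0⟩
        (fun i : ZMod N => |m t i / ρ t i| + Real.sqrt (p' (ρ t i)))) :
    ∀ t : ℝ,
      DifferentiableAt ℝ (fun s => ∑ i : ZMod N,
        ((1 / 2) * ρ s i * (m s i / ρ s i) ^ 2 + P (ρ s i)
          + κ / 2 * (dP N (ρ s) i) ^ 2)) t ∧
      deriv (fun s => ∑ i : ZMod N,
        ((1 / 2) * ρ s i * (m s i / ρ s i) ^ 2 + P (ρ s i)
          + κ / 2 * (dP N (ρ s) i) ^ 2)) t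
        ≤ -μ * ∑ i : ZMod N, (dP N (fun j => m t j / ρ t j) i) ^ 2
            - κ * lam t * hh N * ∑ i : ZMod N, (dL N (ρ t) i) ^ 2 ∧
      -μ * ∑ i : ZMod N, (dP N (fun j => m t j / ρ t j) i) ^ 2
            - κ * lam t * hh N * ∑ i : ZMod N, (dL N (ρ t) i) ^ 2 ≤ 0 := by
  intro t
  have hu : ∀ i, |m t i / ρ t i| ≤ 2 * lam t := fun i => by
    have := le_sup' (fun i : ZMod N => |m t i / ρ t i| + Real.sqrt (p' (ρ t i))) (mem_univ i)
    linarith [hlam t, Real.sqrt_nonneg (p' (ρ t i))]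
  have hlam0 : 0 ≤ lam t := by linarith [hu 0, abs_nonneg (m t 0 / ρ t 0)]
  have hE := hasDerivAt_energy κ (hpos t) (fun i => hP _ (hpos t i)) (hρ t) (hm t)
  have hG : 0 ≤ ∑ i, edgeDissipation p P' (lam t) (ρ t i) (ρ t (i + 1))
      (m t i / ρ t i) (m t (i + 1) / ρ t (i + 1)) := sum_nonneg fun i _ =>
    edgeDissipation_nonneg hP hPconv hPp (hpos t i) (hpos t (i + 1)) (hu i) (hu (i + 1))
  have hh0 : 0 < hh N := hh_pos
  refine ⟨hE.differentiableAt, ?_, ?_⟩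
  · rw [hE.deriv, scheme_energy_rate_eq p P' μ κ (lam t) (hpos t), neg_div]
    linarith [div_nonneg hG hh0.le]
  · have viscous := mul_nonneg hμ (sum_nonneg fun i (_ : i ∈ univ) =>
      sq_nonneg (dP N (fun j => m t j / ρ t j) i))
    have numerical := mul_nonneg (mul_nonneg (mul_nonneg hκ.le hlam0) hh0.le)
      (sum_nonneg fun i (_ : i ∈ univ) => sq_nonneg (dL N (ρ t) i))
    linarith

/-- Energy dissipation for the 1D semidiscrete NSK scheme (Theorem 3.2). -/
theorem energy_dissipation_1d
    (N : ℕ) [NeZero N]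
    (p p' P P' : ℝ → ℝ) (μ κ : ℝ) (lam : ℝ → ℝ)
    (hμ : 0 ≤ μ) (hκ : 0 < κ)
    (hp : ∀ r : ℝ, 0 < r → HasDerivAt p (p' r) r)
    (hp'pos : ∀ r : ℝ, 0 < r → 0 < p' r)
    (hP : ∀ r : ℝ, 0 < r → HasDerivAt P (P' r) r)
    (hPconv : ConvexOn ℝ (Set.Ioi (0 : ℝ)) P)
    (hPp : ∀ r : ℝ, 0 < r → r * P' r - P r = p r)
    (ρ m : ℝ → ZMod N → ℝ)
    (hpos : ∀ t : ℝ, ∀ i : ZMod N, 0 < ρ t i)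
    (hρ : ∀ t : ℝ, ∀ i : ZMod N,
      HasDerivAt (fun s => ρ s i) (-(Frho N (lam t) (ρ t) (m t) i)) t)
    (hm : ∀ t : ℝ, ∀ i : ZMod N,
      HasDerivAt (fun s => m s i) (-(Fm N p μ κ (lam t) (ρ t) (m t) i)) t)
    (hlam : ∀ t : ℝ, lam t ≥ (1 / 2) *
      Finset.univ.sup' ⟨0, Finset.mem_univ 0⟩
        (fun i : ZMod N => |m t i / ρ t i| + Real.sqrt (p' (ρ t i)))) :
    ∀ t : ℝ,
      DifferentiableAt ℝ (fun s => ∑ i : ZMod N,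
        ((1 / 2) * ρ s i * (m s i / ρ s i) ^ 2 + P (ρ s i)
          + κ / 2 * (dP N (ρ s) i) ^ 2)) t ∧
      deriv (fun s => ∑ i : ZMod N,
        ((1 / 2) * ρ s i * (m s i / ρ s i) ^ 2 + P (ρ s i)
          + κ / 2 * (dP N (ρ s) i) ^ 2)) t
        ≤ -μ * ∑ i : ZMod N, (dP N (fun j => m t j / ρ t j) i) ^ 2
            - κ * lam t * hh N * ∑ i : ZMod N, (dL N (ρ t) i) ^ 2 ∧
      -μ * ∑ i : ZMod N, (dP N (fun j => m t j / ρ t j) i) ^ 2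
            - κ * lam t * hh N * ∑ i : ZMod N, (dL N (ρ t) i) ^ 2 ≤ 0 :=
  energy_dissipation_1d_general N p p' P P' μ κ lam hμ hκ hP hPconv hPp ρ m hpos hρ hm hlam
end
end

section
/- Entropy stability of the central scheme with Lax–Friedrichs dissipation for the isothermal Euler part: let N ≥ 1, h = 1/N, let p be differentiable on (0,∞) with p' > 0 there, and let P : ℝ → ℝ be differentiable and convex on (0,∞) with r·P'(r) − P(r) = p(r) for all r > 0. Let ρ, u : ZMod N → ℝ with ρ_i > 0 for all i, and let λ ∈ ℝ satisfy λ ≥ (1/2)·max_i ( |u_i| + √(p'(ρ_i)) ). Then A := ∑_i [ (P'(ρ_i) − (1/2)u_i²)·( ∇ᶜ(ρu)_i − λ h Δ_h ρ_i ) + u_i·( ∇ᶜ(ρu²)_i + ∇ᶜ(p∘ρ)_i − λ h Δ_h (ρu)_i ) ] ≥ 0. -/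
open Finset

noncomputable section

/-- Gradient inequality for convex differentiable functions on `Ioi 0`. -/
lemma my_grad_ineq (P P' : ℝ → ℝ)
    (hP : ∀ r : ℝ, 0 < r → HasDerivAt P (P' r) r)
    (hPconv : ConvexOn ℝ (Set.Ioi (0 : ℝ)) P)
    (x y : ℝ) (hx : 0 < x) (hy : 0 < y) :
    P x + P' x * (y - x) ≤ P y := by
  rcases lt_trichotomy x y with hxy | rfl | hyx
  · have h := hPconv.le_slope_of_hasDerivAt (Set.mem_Ioi.mpr hx) (Set.mem_Ioi.mpr hy) hxy (hP x hx)
    rw [slope_def_field] at h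
    have h2 : P' x * (y - x) ≤ P y - P x := by
      have := (le_div_iff₀ (by linarith : (0:ℝ) < y - x)).mp h
      linarith
    linarith
  · simp
  · have h := hPconv.slope_le_of_hasDerivAt (Set.mem_Ioi.mpr hy) (Set.mem_Ioi.mpr hx) hyx (hP x hx)
    rw [slope_def_field] at h
    have h2 : P x - P y ≤ P' x * (x - y) := by
      have := (div_le_iff₀ (by linarith : (0:ℝ) < x - y)).mp h
      linarith
    linarith

/-- Per-interface nonnegativity for the Lax–Friedrichs entropy dissipation. -/
lemma my_interface (a b U V D Q ca cb lam : ℝ) (ha : 0 < a) (hb : 0 < b)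
    (hca : 0 ≤ ca) (hcb : 0 ≤ cb) (h1 : a * D ≤ Q) (h2 : Q ≤ b * D)
    (hl1 : |U| + ca ≤ 2 * lam) (hl2 : |V| + cb ≤ 2 * lam) :
    0 ≤ lam * (D * (b - a) + (a + b) * (V - U) ^ 2 / 2) - D * (a * U + b * V) / 2
      + (V - U) ^ 2 * (a * U - b * V) / 4 + (U + V) * Q / 2 := by
  have hD : 0 ≤ (b - a) * D := by nlinarith [h1.trans h2]
  have habs : |U + V| + |V - U| ≤ 4 * lam := by
    have e1 := le_abs_self U
    have e2 := neg_abs_le U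
    have e3 := le_abs_self V
    have e4 := neg_abs_le V
    rcases abs_cases (U + V) with ⟨f1, _⟩ | ⟨f1, _⟩ <;>
      rcases abs_cases (V - U) with ⟨f2, _⟩ | ⟨f2, _⟩ <;> linarith
  have hX : |Q - D * (a + b) / 2| ≤ (b - a) * D / 2 := by
    rw [abs_le]; constructor <;> nlinarith
  have hs1 : -(|U + V| * ((b - a) * D / 2)) ≤ (U + V) * (Q - D * (a + b) / 2) := by
    have t1 := neg_abs_le ((U + V) * (Q - D * (a + b) / 2))
    have t2 : |(U + V) * (Q - D * (a + b) / 2)| = |U + V| * |Q - D * (a + b) / 2| := abs_mul _ _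
    have t3 := mul_le_mul_of_nonneg_left hX (abs_nonneg (U + V))
    linarith
  have hs2 : (V - U) * ((b - a) * D) ≤ |V - U| * ((b - a) * D) :=
    mul_le_mul_of_nonneg_right (le_abs_self _) hD
  have hlam4 : (|U + V| + |V - U|) / 4 ≤ lam := by linarith
  have hpart1 : ((|U + V| + |V - U|) / 4) * ((b - a) * D) ≤ lam * ((b - a) * D) :=
    mul_le_mul_of_nonneg_right hlam4 hD
  have h2l : 0 ≤ 2 * lam * (a + b) + a * U - b * V := by
    have t1 := mul_le_mul_of_nonneg_left hl1 ha.le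
    have t2 := mul_le_mul_of_nonneg_left hl2 hb.le
    have t3 := mul_le_mul_of_nonneg_left (neg_abs_le U) ha.le
    have t4 := mul_le_mul_of_nonneg_left (le_abs_self V) hb.le
    have t5 := mul_nonneg ha.le hca
    have t6 := mul_nonneg hb.le hcb
    nlinarith
  have hpart2 : 0 ≤ (V - U) ^ 2 * (2 * lam * (a + b) + a * U - b * V) :=
    mul_nonneg (sq_nonneg _) h2l
  nlinarith [hs1, hs2, hpart1, hpart2]

/-- `h` times the summand of the entropy balance. -/
def Wf (N : ℕ) (p P' : ℝ → ℝ) (lam : ℝ) (ρ u : ZMod N → ℝ) (i : ZMod N) : ℝ :=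
  (P' (ρ i) - u i ^ 2 / 2) * ((ρ (i + 1) * u (i + 1) - ρ (i - 1) * u (i - 1)) / 2
      - lam * (ρ (i + 1) - 2 * ρ i + ρ (i - 1)))
    + u i * ((ρ (i + 1) * u (i + 1) ^ 2 + p (ρ (i + 1))
        - (ρ (i - 1) * u (i - 1) ^ 2 + p (ρ (i - 1)))) / 2
      - lam * (ρ (i + 1) * u (i + 1) - 2 * (ρ i * u i) + ρ (i - 1) * u (i - 1)))

/-- Per-interface entropy dissipation. -/
def Bf (N : ℕ) (p P' : ℝ → ℝ) (lam : ℝ) (ρ u : ZMod N → ℝ) (i : ZMod N) : ℝ :=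
  lam * ((P' (ρ (i + 1)) - P' (ρ i)) * (ρ (i + 1) - ρ i)
      + (ρ i + ρ (i + 1)) * (u (i + 1) - u i) ^ 2 / 2)
    - (P' (ρ (i + 1)) - P' (ρ i)) * (ρ i * u i + ρ (i + 1) * u (i + 1)) / 2
    + (u (i + 1) - u i) ^ 2 * (ρ i * u i - ρ (i + 1) * u (i + 1)) / 4
    + (u i + u (i + 1)) * (p (ρ (i + 1)) - p (ρ i)) / 2

/-- Telescoping helper `H`. -/
def Hf (N : ℕ) (p P' : ℝ → ℝ) (lam : ℝ) (ρ u : ZMod N → ℝ) (i : ZMod N) : ℝ :=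
  lam * ((P' (ρ (i + 1)) - u (i + 1) ^ 2 / 2) * ρ i + u (i + 1) * (ρ i * u i))
    + ((P' (ρ (i + 1)) - u (i + 1) ^ 2 / 2) * (ρ i * u i)
        + u (i + 1) * (ρ i * u i ^ 2 + p (ρ i))) / 2

/-- Telescoping helper `E`. -/
def Ef (N : ℕ) (p P' : ℝ → ℝ) (lam : ℝ) (ρ u : ZMod N → ℝ) (i : ZMod N) : ℝ :=
  lam * ((P' (ρ i) - u i ^ 2 / 2) * ρ i + u i * (ρ i * u i))
    - ((P' (ρ i) - u i ^ 2 / 2) * (ρ i * u i) + u i * (ρ i * u i ^ 2 + p (ρ i))) / 2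
    + u i * p (ρ i)

lemma my_keyid (N : ℕ) (p P' : ℝ → ℝ) (lam : ℝ) (ρ u : ZMod N → ℝ) (i : ZMod N) :
    Wf N p P' lam ρ u i = Bf N p P' lam ρ u i
      + (Hf N p P' lam ρ u i - Hf N p P' lam ρ u (i - 1))
      + (Ef N p P' lam ρ u i - Ef N p P' lam ρ u (i + 1)) := by
  simp only [Wf, Bf, Hf, Ef]
  rw [show i - 1 + 1 = i from by ring]
  ring

lemma my_shift_add (N : ℕ) [NeZero N] (g : ZMod N → ℝ) :
    ∑ i : ZMod N, g (i + 1) = ∑ i : ZMod N, g i :=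
  Fintype.sum_equiv (Equiv.addRight 1) _ _ fun _ => rfl

lemma my_shift_sub (N : ℕ) [NeZero N] (g : ZMod N → ℝ) :
    ∑ i : ZMod N, g (i - 1) = ∑ i : ZMod N, g i :=
  Fintype.sum_equiv (Equiv.subRight 1) _ _ fun _ => rfl

lemma my_sum_WB (N : ℕ) [NeZero N] (p P' : ℝ → ℝ) (lam : ℝ) (ρ u : ZMod N → ℝ) :
    ∑ i : ZMod N, Wf N p P' lam ρ u i = ∑ i : ZMod N, Bf N p P' lam ρ u i := by
  calc ∑ i : ZMod N, Wf N p P' lam ρ u i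
      = ∑ i : ZMod N, (Bf N p P' lam ρ u i
          + (Hf N p P' lam ρ u i - Hf N p P' lam ρ u (i - 1))
          + (Ef N p P' lam ρ u i - Ef N p P' lam ρ u (i + 1))) :=
        Finset.sum_congr rfl fun i _ => my_keyid N p P' lam ρ u i
    _ = (∑ i : ZMod N, Bf N p P' lam ρ u i)
          + ((∑ i : ZMod N, Hf N p P' lam ρ u i) - ∑ i : ZMod N, Hf N p P' lam ρ u (i - 1))
          + ((∑ i : ZMod N, Ef N p P' lam ρ u i) - ∑ i : ZMod N, Ef N p P' lam ρ u (i + 1)) := by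
        simp [Finset.sum_add_distrib, Finset.sum_sub_distrib]
    _ = ∑ i : ZMod N, Bf N p P' lam ρ u i := by
        rw [my_shift_sub N (Hf N p P' lam ρ u), my_shift_add N (Ef N p P' lam ρ u)]; ring

/-- Entropy stability of the central scheme with Lax–Friedrichs dissipation for the
isothermal Euler part: the term `A` in the discrete energy balance is nonnegative. -/
theorem entropy_stability_euler_part
    (N : ℕ) [NeZero N]
    (p p' P P' : ℝ → ℝ)
    (hp : ∀ r : ℝ, 0 < r → HasDerivAt p (p' r) r)
    (hp'pos : ∀ r : ℝ, 0 < r → 0 < p' r)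
    (hP : ∀ r : ℝ, 0 < r → HasDerivAt P (P' r) r)
    (hPconv : ConvexOn ℝ (Set.Ioi (0 : ℝ)) P)
    (hPp : ∀ r : ℝ, 0 < r → r * P' r - P r = p r)
    (ρ u : ZMod N → ℝ) (hpos : ∀ i : ZMod N, 0 < ρ i)
    (lam : ℝ)
    (hlam : lam ≥ (1 / 2) *
      Finset.univ.sup' ⟨0, Finset.mem_univ 0⟩
        (fun i : ZMod N => |u i| + Real.sqrt (p' (ρ i)))) :
    0 ≤ ∑ i : ZMod N,
      ((P' (ρ i) - (1 / 2) * (u i) ^ 2) *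
          (dC N (fun j => ρ j * u j) i - lam * hh N * dL N ρ i)
        + u i * (dC N (fun j => ρ j * (u j) ^ 2) i + dC N (fun j => p (ρ j)) i
            - lam * hh N * dL N (fun j => ρ j * u j) i)) := by
  have hNpos : (0 : ℝ) < (N : ℝ) := by
    exact_mod_cast Nat.pos_of_ne_zero (NeZero.ne N)
  have hhpos : 0 < hh N := by rw [hh]; positivity
  have hhne : hh N ≠ 0 := ne_of_gt hhpos
  have hterm : ∀ i : ZMod N,
      ((P' (ρ i) - (1 / 2) * (u i) ^ 2) *
          (dC N (fun j => ρ j * u j) i - lam * hh N * dL N ρ i)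
        + u i * (dC N (fun j => ρ j * (u j) ^ 2) i + dC N (fun j => p (ρ j)) i
            - lam * hh N * dL N (fun j => ρ j * u j) i))
        = Wf N p P' lam ρ u i / hh N := by
    intro i
    simp only [dC, dL, Wf]
    field_simp
    ring
  rw [Finset.sum_congr rfl fun i _ => hterm i, ← Finset.sum_div]
  apply div_nonneg _ hhpos.le
  rw [my_sum_WB]
  apply Finset.sum_nonneg
  intro i _
  have hsup : ∀ j : ZMod N, |u j| + Real.sqrt (p' (ρ j)) ≤ 2 * lam := by
    intro j
    have h1 := Finset.le_sup' (f := fun i : ZMod N => |u i| + Real.sqrt (p' (ρ i)))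
      (Finset.mem_univ j)
    linarith
  have ea := hPp (ρ i) (hpos i)
  have eb := hPp (ρ (i + 1)) (hpos (i + 1))
  have g1 := my_grad_ineq P P' hP hPconv (ρ (i + 1)) (ρ i) (hpos (i + 1)) (hpos i)
  have g2 := my_grad_ineq P P' hP hPconv (ρ i) (ρ (i + 1)) (hpos i) (hpos (i + 1))
  exact my_interface (ρ i) (ρ (i + 1)) (u i) (u (i + 1))
    (P' (ρ (i + 1)) - P' (ρ i)) (p (ρ (i + 1)) - p (ρ i))
    (Real.sqrt (p' (ρ i))) (Real.sqrt (p' (ρ (i + 1)))) lam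
    (hpos i) (hpos (i + 1)) (Real.sqrt_nonneg _) (Real.sqrt_nonneg _)
    (by nlinarith) (by nlinarith) (hsup i) (hsup (i + 1))
end
end

section
/- One-dimensional capillarity cancellation identity: for every N ≥ 1 with h = 1/N and all periodic grid functions ρ, u : ZMod N → ℝ, ∑_i [ −(Δ_h ρ_i)·∇ᶜ(ρu)_i + (1/2) u_i · ∇⁻( (∇⁺ρ)² )_i ] = ∑_i u_i · ∇⁻( (ρ_{·+1} Δ_h ρ_· + ρ_· Δ_h ρ_{·+1})/2 )_i, where ∇⁻ on the right-hand side is applied to the grid function i ↦ (ρ_{i+1} Δ_h ρ_i + ρ_i Δ_h ρ_{i+1})/2 and on the left-hand side to the grid function i ↦ (∇⁺ρ_i)². Consequently, the capillary contribution to the discrete energy balance reduces to ∑_i λ h (Δ_h ρ_i)² ≥ 0 for any λ ≥ 0. -/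
open Finset

noncomputable section

/-- One-dimensional capillarity cancellation identity, and nonnegativity of the
remaining capillary contribution to the discrete energy balance. -/
theorem capillarity_cancellation_1d
    (N : ℕ) [NeZero N] (ρ u : ZMod N → ℝ) :
    (∑ i : ZMod N,
        (-(dL N ρ i) * dC N (fun j => ρ j * u j) i
          + (1 / 2) * u i * dM N (fun j => (dP N ρ j) ^ 2) i)
      = ∑ i : ZMod N,
          u i * dM N (fun j => (ρ (j + 1) * dL N ρ j + ρ j * dL N ρ (j + 1)) / 2) i) ∧
    ∀ lam : ℝ, 0 ≤ lam → 0 ≤ ∑ i : ZMod N, lam * hh N * (dL N ρ i) ^ 2 := by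

  have hN : (N : ℝ) ≠ 0 := Nat.cast_ne_zero.mpr (NeZero.ne N)
  have hh0 : hh N ≠ 0 := one_div_ne_zero hN
  constructor
  · set f : ZMod N → ℝ := fun i => -(dL N ρ (i - 1)) * (ρ i * u i) / (2 * hh N) with hf
    set g : ZMod N → ℝ := fun i => (dL N ρ (i + 1)) * (ρ i * u i) / (2 * hh N) with hg
    have key : ∀ i : ZMod N,
        (-(dL N ρ i) * dC N (fun j => ρ j * u j) i
          + (1 / 2) * u i * dM N (fun j => (dP N ρ j) ^ 2) i)
        - u i * dM N (fun j => (ρ (j + 1) * dL N ρ j + ρ j * dL N ρ (j + 1)) / 2) i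
        = (f (i + 1) - f i) + (g (i - 1) - g i) := by
      intro i
      simp only [hf, hg, dL, dC, dM, dP, sub_add_cancel, add_sub_cancel_right]
      field_simp
      ring
    rw [← sub_eq_zero, ← Finset.sum_sub_distrib]
    calc ∑ i : ZMod N,
          ((-(dL N ρ i) * dC N (fun j => ρ j * u j) i
            + (1 / 2) * u i * dM N (fun j => (dP N ρ j) ^ 2) i)
          - u i * dM N (fun j => (ρ (j + 1) * dL N ρ j + ρ j * dL N ρ (j + 1)) / 2) i)
        = ∑ i : ZMod N, ((f (i + 1) - f i) + (g (i - 1) - g i)) :=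
          Finset.sum_congr rfl (fun i _ => key i)
      _ = 0 := by
          rw [Finset.sum_add_distrib, Finset.sum_sub_distrib, Finset.sum_sub_distrib]
          have s1 : ∑ i : ZMod N, f (i + 1) = ∑ i : ZMod N, f i :=
            Fintype.sum_equiv (Equiv.addRight (1 : ZMod N)) _ _ (fun i => rfl)
          have s2 : ∑ i : ZMod N, g (i - 1) = ∑ i : ZMod N, g i :=
            Fintype.sum_equiv (Equiv.subRight (1 : ZMod N)) _ _ (fun i => rfl)
          rw [s1, s2]; ring
  · intro lam hlam
    refine Finset.sum_nonneg fun i _ => ?_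
    have : (0:ℝ) ≤ hh N := by unfold hh; positivity
    exact mul_nonneg (mul_nonneg hlam this) (sq_nonneg _)
end
end
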